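/- arXiv:2408.02264 — 5 statements merged into one kernel-verified Lean document; each statement's English description precedes it below -/
import Mathlib

section
/- For every real x ≥ 1 and every f : ℝ⁺ → ℝ⁺, the number of positive integers n ≤ x that have a prime factor p > f(x) together with a divisor d > 1 satisfying d ≡ 1 (mod p) is less than x(log x + 1) / f(x). -/
/-!
If `p ∣ n` and `d ∣ n` with `1 < d ≡ 1 (mod p)`, then `d = kp + 1` with `k ≥ 1` is coprime to `p`,
so `p (kp + 1) ∣ n`. Counting multiples, the number of such `n ≤ x` is at most
`∑_{p > F} ∑_{k ≤ x} x / (k p²) ≤ x (log x + 1) ∑_{p > F} 1 / p²` with `F = f x`, and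
`∑_{p > F} 1 / p² < 1 / F`: for odd `p = 2k + 1` one has `1 / p² < (1 / k - 1 / (k + 1)) / 4`, which telescopes.
-/

open Finset

lemma sum_Ico_one_div_sub_one_div_succ {a b : ℕ} (hab : a ≤ b) :
    ∑ k ∈ Ico a b, ((1 : ℝ) / k - 1 / (k + 1)) = 1 / a - 1 / b := by
  have := sum_Ico_sub (fun k : ℕ => -(1 : ℝ) / k) hab
  push_cast at this
  rw [← neg_sub_neg, ← neg_div, ← neg_div, ← this]
  exact sum_congr rfl fun k _ => by ring

lemma sum_one_div_sub_one_div_succ_le {S : Finset ℕ} {j : ℕ} (hj : 0 < j)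
    (hS : ∀ k ∈ S, j ≤ k) : ∑ k ∈ S, ((1 : ℝ) / k - 1 / (k + 1)) ≤ 1 / j := by
  obtain ⟨n, hn⟩ := exists_nat_subset_range S
  have hSsub : S ⊆ Ico j (j + n) := fun k hk =>
    mem_Ico.2 ⟨hS k hk, by have := mem_range.1 (hn hk); omega⟩
  calc ∑ k ∈ S, ((1 : ℝ) / k - 1 / (k + 1))
      ≤ ∑ k ∈ Ico j (j + n), ((1 : ℝ) / k - 1 / (k + 1)) := by
        refine sum_le_sum_of_subset_of_nonneg hSsub fun k hk _ => sub_nonneg.2 ?_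
        have : (0 : ℝ) < k := by exact_mod_cast hj.trans_le (mem_Ico.1 hk).1
        exact one_div_le_one_div_of_le this (by linarith)
    _ = 1 / j - 1 / (j + n : ℕ) := sum_Ico_one_div_sub_one_div_succ (by omega)
    _ ≤ 1 / j := sub_le_self _ (by positivity)

lemma sum_one_div_sq_le_of_odd {P : Finset ℕ} {j : ℕ} (hj : 0 < j)
    (hP : ∀ p ∈ P, Odd p ∧ 2 * j + 1 ≤ p) :
    ∑ p ∈ P, (1 : ℝ) / p ^ 2 ≤ 1 / (4 * j) := by
  have hinj : Set.InjOn (· / 2) (P : Set ℕ) := by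
    intro a ha b hb hab
    obtain ⟨⟨_, _⟩, _⟩ := hP a ha
    obtain ⟨⟨_, _⟩, _⟩ := hP b hb
    simp only at hab
    omega
  have hterm : ∀ p ∈ P, (1 : ℝ) / p ^ 2 ≤ 1 / 4 * (1 / (p / 2 : ℕ) - 1 / ((p / 2 : ℕ) + 1)) := by
    intro p hp
    obtain ⟨⟨k, rfl⟩, hjp⟩ := hP p hp
    have hk : (1 : ℝ) ≤ k := by exact_mod_cast (show 1 ≤ k by omega)
    rw [show (2 * k + 1) / 2 = k by omega]
    push_cast
    field_simp
    nlinarith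
  calc ∑ p ∈ P, (1 : ℝ) / p ^ 2
      ≤ ∑ p ∈ P, (1 : ℝ) / 4 * (1 / (p / 2 : ℕ) - 1 / ((p / 2 : ℕ) + 1)) := sum_le_sum hterm
    _ = 1 / 4 * ∑ k ∈ P.image (· / 2), ((1 : ℝ) / (k : ℕ) - 1 / ((k : ℕ) + 1)) := by
        rw [← mul_sum, sum_image hinj]
    _ ≤ 1 / 4 * (1 / j) := by
        gcongr
        refine sum_one_div_sub_one_div_succ_le hj fun k hk => ?_
        obtain ⟨p, hp, rfl⟩ := mem_image.1 hk
        have := (hP p hp).2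
        omega
    _ = 1 / (4 * j) := by rw [one_div_mul_one_div]

lemma sum_one_div_sq_lt_of_prime {F : ℝ} (hF : 0 < F) {P : Finset ℕ}
    (hP : ∀ p ∈ P, p.Prime ∧ F < p) : ∑ p ∈ P, (1 : ℝ) / p ^ 2 < 1 / F := by
  -- Odd primes `p > F` are `≥ 2j + 1`, and `4j > 2F - 2 ≥ F` as soon as `F ≥ 2`.
  set j := ⌊(F - 1) / 2⌋₊ + 1
  have hj : (F - 1) / 2 < j := by push_cast [j]; exact Nat.lt_floor_add_one _
  have hodd : ∀ p ∈ P.erase 2, Odd p ∧ 2 * j + 1 ≤ p := by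
    intro p hp
    obtain ⟨hp2, hpP⟩ := mem_erase.1 hp
    obtain ⟨hprime, hFp⟩ := hP p hpP
    obtain ⟨m, rfl⟩ := hprime.odd_of_ne_two hp2
    refine ⟨odd_two_mul_add_one m, ?_⟩
    have : ⌊(F - 1) / 2⌋₊ < m :=
      (Nat.floor_lt' (by have := hprime.two_le; omega)).2 (by push_cast at hFp; linarith)
    omega
  have hsum := sum_one_div_sq_le_of_odd (Nat.succ_pos _) hodd
  rcases lt_or_ge F 2 with hF2 | hF2
  · calc ∑ p ∈ P, (1 : ℝ) / p ^ 2
        ≤ ∑ p ∈ insert 2 (P.erase 2), (1 : ℝ) / p ^ 2 :=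
          sum_le_sum_of_subset_of_nonneg (insert_erase_subset 2 P) fun _ _ _ => by positivity
      _ ≤ 1 / 4 + 1 / 4 := by
          rw [sum_insert (notMem_erase 2 P)]
          have : (1 : ℝ) / (4 * j) ≤ 1 / 4 := by gcongr; simp [j]
          exact add_le_add (by norm_num) (hsum.trans this)
      _ < 1 / F := by rw [lt_one_div (by norm_num) hF]; linarith
  · have h2 : 2 ∉ P := fun h => by have := (hP 2 h).2; push_cast at this; linarith
    rw [erase_eq_of_notMem h2] at hsum
    refine hsum.trans_lt (one_div_lt_one_div_of_lt hF ?_)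
    linarith

lemma Nat.Prime.exists_mul_mul_add_one_dvd {p n d : ℕ} (hp : p.Prime) (hpn : p ∣ n)
    (hdn : d ∣ n) (hd : 1 < d) (hdp : d % p = 1 % p) : ∃ k, 0 < k ∧ p * (k * p + 1) ∣ n := by
  rw [Nat.mod_eq_of_lt hp.one_lt] at hdp
  have hkd : d / p * p + 1 = d := by rw [← hdp, mul_comm, Nat.div_add_mod]
  have hpd : p * d ∣ n := ((hp.coprime_iff_not_dvd).2 fun h => by
    rw [Nat.dvd_iff_mod_eq_zero] at h
    omega).mul_dvd_of_dvd_of_dvd hpn hdn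
  refine ⟨d / p, Nat.pos_of_ne_zero fun h => ?_, by rwa [hkd]⟩
  rw [h] at hkd
  omega

lemma ncard_le_sum_div_mul_mul_add_one (F x : ℝ) :
    {n : ℕ | 0 < n ∧ (n : ℝ) ≤ x ∧ ∃ p : ℕ, p.Prime ∧ F < p ∧ p ∣ n ∧
        ∃ d : ℕ, d ∣ n ∧ 1 < d ∧ d % p = 1 % p}.ncard ≤
      ∑ t ∈ (Icc 2 ⌊x⌋₊).filter (fun p : ℕ => p.Prime ∧ F < p) ×ˢ Icc 1 ⌊x⌋₊,
        ⌊x⌋₊ / (t.1 * (t.2 * t.1 + 1)) := by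
  set X := ⌊x⌋₊
  calc _ ≤ #((((Icc 2 X).filter (fun p : ℕ => p.Prime ∧ F < p) ×ˢ Icc 1 X).biUnion
          fun t => (Ioc 0 X).filter (t.1 * (t.2 * t.1 + 1) ∣ ·))) := by
        rw [← Set.ncard_coe_finset]
        refine Set.ncard_le_ncard ?_ (finite_toSet _)
        rintro n ⟨hn, hnx, p, hp, hFp, hpn, d, hdn, hd, hdp⟩
        obtain ⟨k, hk, hkn⟩ := hp.exists_mul_mul_add_one_dvd hpn hdn hd hdp
        have hnX : n ≤ X := Nat.le_floor hnx
        have hpX : p ≤ X := (Nat.le_of_dvd hn (dvd_of_mul_right_dvd hkn)).trans hnX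
        have hkX : k * p + 1 ≤ X := (Nat.le_of_dvd hn (dvd_of_mul_left_dvd hkn)).trans hnX
        rw [mem_coe, mem_biUnion]
        refine ⟨(p, k), mem_product.2 ⟨mem_filter.2 ⟨mem_Icc.2 ⟨hp.two_le, hpX⟩, hp, hFp⟩,
          mem_Icc.2 ⟨hk, ?_⟩⟩, mem_filter.2 ⟨mem_Ioc.2 ⟨hn, hnX⟩, hkn⟩⟩
        nlinarith [hp.two_le]
    _ ≤ _ := card_biUnion_le
    _ = _ := by simp_rw [Nat.Ioc_filter_dvd_card_eq_div]

lemma natCast_div_mul_mul_add_one_le {X p k : ℕ} {x : ℝ} (hXx : (X : ℝ) ≤ x)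
    (hp : 0 < p) (hk : 0 < k) :
    ((X / (p * (k * p + 1)) : ℕ) : ℝ) ≤ x * (1 / p ^ 2 * (1 / k)) := by
  have hx : 0 ≤ x := (Nat.cast_nonneg X).trans hXx
  calc ((X / (p * (k * p + 1)) : ℕ) : ℝ)
      ≤ X / (p * (k * p + 1) : ℕ) := Nat.cast_div_le
    _ ≤ x / (k * p ^ 2) := by
        gcongr
        push_cast
        nlinarith
    _ = x * (1 / p ^ 2 * (1 / k)) := by ring

lemma sum_Icc_one_div_le_log_add_one {x : ℝ} (hx : 1 ≤ x) :
    ∑ k ∈ Icc 1 ⌊x⌋₊, (1 : ℝ) / k ≤ Real.log x + 1 := by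
  have hX : (0 : ℝ) < ⌊x⌋₊ := by exact_mod_cast Nat.floor_pos.2 hx
  calc ∑ k ∈ Icc 1 ⌊x⌋₊, (1 : ℝ) / k = harmonic ⌊x⌋₊ := by simp [harmonic_eq_sum_Icc]
    _ ≤ 1 + Real.log ⌊x⌋₊ := harmonic_le_one_add_log _
    _ ≤ Real.log x + 1 := by
        have := Real.log_le_log hX (Nat.floor_le (by linarith))
        linarith

theorem stmt2 (f : ℝ → ℝ) (hf : ∀ x > 0, f x > 0) (x : ℝ) (hx : 1 ≤ x) :
    ({n : ℕ | 0 < n ∧ (n : ℝ) ≤ x ∧ ∃ p : ℕ, p.Prime ∧ (p : ℝ) > f x ∧ p ∣ n ∧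
        ∃ d : ℕ, d ∣ n ∧ 1 < d ∧ d % p = 1 % p}.ncard : ℝ)
      < x * (Real.log x + 1) / f x := by
  have hx0 : 0 < x := by linarith
  set X := ⌊x⌋₊
  set P := (Icc 2 X).filter (fun p : ℕ => p.Prime ∧ f x < p)
  calc _ ≤ ((∑ t ∈ P ×ˢ Icc 1 X, X / (t.1 * (t.2 * t.1 + 1)) : ℕ) : ℝ) := by
        exact_mod_cast ncard_le_sum_div_mul_mul_add_one (f x) x
    _ ≤ ∑ t ∈ P ×ˢ Icc 1 X, x * (1 / (t.1 : ℝ) ^ 2 * (1 / t.2)) := by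
        push_cast
        refine sum_le_sum fun t ht => ?_
        obtain ⟨hp, hk⟩ := mem_product.1 ht
        exact natCast_div_mul_mul_add_one_le (Nat.floor_le hx0.le)
          (mem_filter.1 hp).2.1.pos (mem_Icc.1 hk).1
    _ = x * ((∑ p ∈ P, 1 / (p : ℝ) ^ 2) * ∑ k ∈ Icc 1 X, 1 / (k : ℝ)) := by
        rw [← mul_sum, sum_mul_sum, sum_product]
    _ ≤ x * ((∑ p ∈ P, 1 / (p : ℝ) ^ 2) * (Real.log x + 1)) := by
        gcongr
        exact sum_Icc_one_div_le_log_add_one hx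
    _ < x * (1 / f x * (Real.log x + 1)) := by
        have := Real.log_nonneg hx
        gcongr
        exact sum_one_div_sq_lt_of_prime (hf x hx0) fun p hp => (mem_filter.1 hp).2
    _ = x * (Real.log x + 1) / f x := by ring
end

section
/- There exists a constant c such that for all sufficiently large x and all functions g, h : ℝ⁺ → ℝ⁺ with g(x) ≥ 2 and h(x) ≥ 2, the number of positive integers n ≤ x having a divisor d ≥ h(x) all of whose prime factors are less than g(x) is less than x(log(g(x)) + c)/log(h(x)). -/
/-!
If `n ≤ x` has a divisor `d ≥ h` all of whose prime factors are `< g`, then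
`log h ≤ log d ≤ ∑_{p < g} v_p(n) log p`. Summing over `n ≤ x` turns the right-hand side into
`∑_{p < g} v_p(⌊x⌋!) log p`, and Legendre's formula `(p - 1) v_p(N!) = N - s_p(N)` (with `s_p` the
base-`p` digit sum) bounds this by `x ∑_{p < g} log p / (p - 1)`. The same formula applied to
`n!`, together with Chebyshev's bounds `θ(n), ψ(n) = O(n)`, gives the
Mertens-type estimate `∑_{p ≤ n} log p / (p - 1) ≤ log n + O(1)`.
-/

open Filter Finset Real Chebyshev
open scoped Nat

noncomputable def logPart (s : Finset ℕ) (n : ℕ) : ℝ :=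
  ∑ p ∈ s, n.factorization p * log p

theorem log_eq_logPart {s : Finset ℕ} {n : ℕ} (h : n.primeFactors ⊆ s) : log n = logPart s n := by
  rw [log_nat_eq_sum_factorization, logPart,
    Finsupp.sum_of_support_subset _ (n.support_factorization ▸ h) _ (by simp)]

theorem logPart_nonneg (s : Finset ℕ) (n : ℕ) : 0 ≤ logPart s n :=
  sum_nonneg fun p _ ↦ mul_nonneg (Nat.cast_nonneg _) (log_natCast_nonneg p)

theorem logPart_le_of_dvd (s : Finset ℕ) {d n : ℕ} (hdn : d ∣ n) (hn : n ≠ 0) :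
    logPart s d ≤ logPart s n := by
  have hd : d ≠ 0 := ne_zero_of_dvd_ne_zero hn hdn
  refine sum_le_sum fun p _ ↦ mul_le_mul_of_nonneg_right ?_ (log_natCast_nonneg p)
  exact_mod_cast (Nat.factorization_le_iff_dvd hd hn).mpr hdn p

theorem sum_logPart_Icc (s : Finset ℕ) (N : ℕ) :
    ∑ n ∈ Icc 1 N, logPart s n = logPart s N ! := by
  have hfact : N ! = ∏ n ∈ Icc 1 N, n := by
    rw [← Finset.Ico_add_one_right_eq_Icc, Finset.prod_Ico_id_eq_factorial]
  rw [hfact, logPart, Nat.factorization_prod fun n hn ↦ by grind]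
  simp only [logPart, Finsupp.finsetSum_apply, Nat.cast_sum, sum_mul]
  exact sum_comm

theorem sub_one_mul_factorization_factorial_add_digit_sum {p : ℕ} (hp : p.Prime) (n : ℕ) :
    ((p : ℝ) - 1) * (n !).factorization p + ((p.digits n).sum : ℝ) = n := by
  have := Nat.sub_one_mul_factorization_factorial (n := n) hp
  have := Nat.digit_sum_le p n
  rw [← Nat.cast_pred hp.pos]
  exact_mod_cast (by omega : (p - 1) * (n !).factorization p + (p.digits n).sum = n)

theorem digit_sum_le_sub_one_mul {p : ℕ} (hp : 1 < p) (n : ℕ) :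
    (p.digits n).sum ≤ (p - 1) * (Nat.log p n + 1) := by
  rcases eq_or_ne n 0 with rfl | hn
  · simp
  calc (p.digits n).sum ≤ (p.digits n).length • (p - 1) :=
        List.sum_le_card_nsmul _ _ fun d hd ↦ by have := Nat.digits_lt_base hp hd; omega
    _ = (p - 1) * (Nat.log p n + 1) := by rw [Nat.length_digits p n hp hn, smul_eq_mul, mul_comm]

theorem factorization_factorial_le_div {p : ℕ} (hp : p.Prime) (n : ℕ) :
    ((n !).factorization p : ℝ) ≤ n / (p - 1) := by
  have hp1 : (0 : ℝ) < p - 1 := by linarith [show (2 : ℝ) ≤ p by exact_mod_cast hp.two_le]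
  rw [le_div_iff₀ hp1]
  linarith [sub_one_mul_factorization_factorial_add_digit_sum hp n,
    (p.digits n).sum.cast_nonneg (α := ℝ)]

theorem div_le_factorization_factorial_add {p : ℕ} (hp : p.Prime) (n : ℕ) :
    n / ((p : ℝ) - 1) ≤ (n !).factorization p + (Nat.log p n + 1) := by
  have hp1 : (0 : ℝ) < p - 1 := by linarith [show (2 : ℝ) ≤ p by exact_mod_cast hp.two_le]
  have hdigits : ((p.digits n).sum : ℝ) ≤ (p - 1) * (Nat.log p n + 1) := by
    rw [← Nat.cast_pred hp.pos]
    exact_mod_cast digit_sum_le_sub_one_mul hp.one_lt n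
  rw [div_le_iff₀ hp1]
  linarith [sub_one_mul_factorization_factorial_add_digit_sum hp n]

theorem logPart_factorial_le {s : Finset ℕ} (hs : ∀ p ∈ s, p.Prime) (N : ℕ) :
    logPart s N ! ≤ N * ∑ p ∈ s, log p / (p - 1) := by
  rw [logPart, mul_sum]
  refine sum_le_sum fun p hp ↦ ?_
  calc ((N !).factorization p : ℝ) * log p ≤ N / (p - 1) * log p :=
        mul_le_mul_of_nonneg_right (factorization_factorial_le_div (hs p hp) N)
          (log_natCast_nonneg p)
    _ = N * (log p / (p - 1)) := by ring

theorem log_factorial_eq_logPart_primesLE (n : ℕ) : log n ! = logPart n.primesLE n ! :=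
  log_eq_logPart fun _ hp ↦ Nat.mem_primesLE.mpr
    ⟨(Nat.Prime.dvd_factorial (Nat.prime_of_mem_primeFactors hp)).mp
      (Nat.dvd_of_mem_primeFactors hp), Nat.prime_of_mem_primeFactors hp⟩

theorem sum_primesLE_log_div_sub_one_nonneg (n : ℕ) :
    0 ≤ ∑ p ∈ n.primesLE, log p / (p - 1) :=
  sum_nonneg fun p hp ↦ div_nonneg (log_natCast_nonneg p)
    (by linarith [show (2 : ℝ) ≤ p by exact_mod_cast Nat.two_le_of_mem_primesLE hp])

/-- A weak form of **Mertens' first theorem**. -/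
theorem sum_primesLE_log_div_sub_one_le (n : ℕ) :
    ∑ p ∈ n.primesLE, log p / (p - 1) ≤ log n + 2 * log 4 + 4 := by
  rcases n.eq_zero_or_pos with rfl | hn
  · simp [Nat.primesLE_zero]
    positivity
  have hlog_fact : log n ! ≤ n * log n := by
    rw [← log_pow]
    exact log_le_log (by positivity) (by exact_mod_cast Nat.factorial_le_pow n)
  have hpsi := psi_le_const_mul_self (x := n) n.cast_nonneg
  have htheta := theta_le_log4_mul_x (x := n) n.cast_nonneg
  -- The error terms `log_p n + 1` of Legendre's formula, weighted by `log p`, sum to `ψ n + θ n`.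
  have key : n * ∑ p ∈ n.primesLE, log p / (p - 1) ≤ log n ! + ψ n + θ n := by
    rw [log_factorial_eq_logPart_primesLE, logPart, psi_eq_sum_mul_log_prime,
      theta_eq_sum_primesLE_log, mul_sum, ← sum_add_distrib, ← sum_add_distrib]
    refine sum_le_sum fun p hp ↦ ?_
    calc (n : ℝ) * (log p / (p - 1)) = n / (p - 1) * log p := by ring
      _ ≤ ((n !).factorization p + (Nat.log p n + 1)) * log p :=
          mul_le_mul_of_nonneg_right
            (div_le_factorization_factorial_add (Nat.prime_of_mem_primesLE hp) n)
            (log_natCast_nonneg p)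
      _ = _ := by ring
  have hn' : (0 : ℝ) < n := by exact_mod_cast hn
  refine le_of_mul_le_mul_left ?_ hn'
  linarith

theorem ncard_mul_le_logPart_factorial {A : Set ℕ} {s : Finset ℕ} {N : ℕ} {L : ℝ}
    (hA : A ⊆ Icc 1 N) (hL : ∀ n ∈ A, ∃ d, d ∣ n ∧ L ≤ log d ∧ d.primeFactors ⊆ s) :
    A.ncard * L ≤ logPart s N ! := by
  have hfin : A.Finite := (Icc 1 N).finite_toSet.subset hA
  rw [Set.ncard_eq_toFinset_card A hfin, ← sum_logPart_Icc]
  calc (hfin.toFinset.card : ℝ) * L = ∑ _n ∈ hfin.toFinset, L := by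
        rw [sum_const, nsmul_eq_mul]
    _ ≤ ∑ n ∈ hfin.toFinset, logPart s n := by
        refine sum_le_sum fun n hn ↦ ?_
        rw [Set.Finite.mem_toFinset] at hn
        obtain ⟨d, hdn, hLd, hds⟩ := hL n hn
        have hn0 : n ≠ 0 := by have := hA hn; grind
        exact hLd.trans ((log_eq_logPart hds).le.trans (logPart_le_of_dvd s hdn hn0))
    _ ≤ ∑ n ∈ Icc 1 N, logPart s n :=
        sum_le_sum_of_subset_of_nonneg (by simpa using hA) fun n _ _ ↦ logPart_nonneg s n

theorem stmt3 :
    ∃ c : ℝ, ∀ᶠ x : ℝ in atTop, ∀ g h : ℝ → ℝ, g x ≥ 2 → h x ≥ 2 →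
      ({n : ℕ | 0 < n ∧ (n : ℝ) ≤ x ∧ ∃ d : ℕ, d ∣ n ∧ (d : ℝ) ≥ h x ∧
          ∀ p : ℕ, p.Prime → p ∣ d → (p : ℝ) < g x}.ncard : ℝ)
        < x * (Real.log (g x) + c) / Real.log (h x) := by
  refine ⟨2 * log 4 + 5, ?_⟩
  filter_upwards [eventually_gt_atTop 0] with x hx g h hg hh
  have hmertens : ∑ p ∈ (⌊g x⌋₊).primesLE, log p / (p - 1) ≤ log (g x) + 2 * log 4 + 4 :=
    (sum_primesLE_log_div_sub_one_le _).trans <| by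
      gcongr
      exacts [Nat.cast_pos.mpr (Nat.floor_pos.mpr (by linarith)), Nat.floor_le (by linarith)]
  rw [lt_div_iff₀ (log_pos (by linarith))]
  calc _ ≤ logPart (⌊g x⌋₊).primesLE ⌊x⌋₊ ! := by
        refine ncard_mul_le_logPart_factorial (fun n ⟨hn, hnx, _⟩ ↦ ?_)
          fun n ⟨_, _, d, hdn, hdh, hdg⟩ ↦ ?_
        · exact mem_Icc.mpr ⟨hn, Nat.le_floor hnx⟩
        refine ⟨d, hdn, log_le_log (by linarith) hdh, fun p hp ↦ ?_⟩
        have hp' := Nat.prime_of_mem_primeFactors hp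
        exact Nat.mem_primesLE.mpr
          ⟨Nat.le_floor (hdg p hp' (Nat.dvd_of_mem_primeFactors hp)).le, hp'⟩
    _ ≤ ⌊x⌋₊ * ∑ p ∈ (⌊g x⌋₊).primesLE, log p / (p - 1) :=
        logPart_factorial_le (fun _ ↦ Nat.prime_of_mem_primesLE) ⌊x⌋₊
    _ ≤ x * (log (g x) + 2 * log 4 + 4) :=
        mul_le_mul (Nat.floor_le hx.le) hmertens (sum_primesLE_log_div_sub_one_nonneg _) hx.le
    _ < x * (log (g x) + (2 * log 4 + 5)) := by linarith
end

section
/- Let G be a finite group with a normal Sylow p-subgroup P of order p, and suppose G is generated by two nontrivial elements u and v whose orders k and ℓ are both coprime to p. Then gcd(k, p−1) ≠ 1 and gcd(ℓ, p−1) ≠ 1. -/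
/-!
If `gcd (orderOf u) (p - 1) = 1`, then `u` acts trivially on `P`, since `Aut P` has order `p - 1`.
So the normal closure `N` of `u` lies in the centralizer of `P`, and `G ⧸ N` is cyclic, generated
by the image of `v`, of order prime to `p`; hence `P ≤ N`. Now `P` is a central Sylow subgroup of
`N`, and `N` is generated by the conjugates of `u`, all of order prime to `p`. Burnside's transfer
`N →* P` kills these generators, yet restricts to the bijection `x ↦ x ^ [N : P]` on `P`, so `P`
is trivial: a contradiction.
-/

open Subgroup

section

variable {G : Type*} [Group G]

theorem eq_one_of_coprime_orderOf_natCard {x : G} (h : (orderOf x).Coprime (Nat.card G)) :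
    x = 1 :=
  orderOf_eq_one_iff.mp (h.eq_one_of_dvd (orderOf_dvd_natCard x))

theorem MonoidHom.map_eq_one_of_coprime {H : Type*} [Group H] (f : G →* H) {x : G}
    (h : (orderOf x).Coprime (Nat.card H)) : f x = 1 :=
  eq_one_of_coprime_orderOf_natCard (h.coprime_dvd_left (orderOf_map_dvd f x))

theorem Subgroup.mem_centralizer_of_coprime_card_mulAut {N : Subgroup G} [N.Normal] {g : G}
    (h : (orderOf g).Coprime (Nat.card (MulAut N))) : g ∈ centralizer (N : Set G) := by
  have hg : MulAut.conjNormal g = 1 := MonoidHom.map_eq_one_of_coprime _ h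
  rw [mem_centralizer_iff]
  intro n hn
  have hconj : g * n * g⁻¹ = n := by
    simpa [MulAut.conjNormal_apply] using congrArg Subtype.val (DFunLike.congr_fun hg ⟨n, hn⟩)
  exact (mul_inv_eq_iff_eq_mul.mp hconj).symm

theorem QuotientGroup.mk_mem_zpowers_of_closure_pair_eq_top {N : Subgroup G} [N.Normal]
    {u v : G} (hgen : closure {u, v} = ⊤) (hu : u ∈ N) (g : G) :
    (g : G ⧸ N) ∈ zpowers (v : G ⧸ N) := by
  have hmap : (closure {u, v}).map (QuotientGroup.mk' N) ≤ zpowers (v : G ⧸ N) := by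
    rw [MonoidHom.map_closure, Set.image_pair, closure_le]
    rintro _ (rfl | rfl)
    · rw [QuotientGroup.mk'_apply, (QuotientGroup.eq_one_iff u).mpr hu]
      exact one_mem _
    · exact mem_zpowers _
  exact hmap (mem_map_of_mem _ (hgen ▸ mem_top g))

theorem Subgroup.le_of_closure_pair_eq_top {N H : Subgroup G} [N.Normal] {u v : G}
    (hgen : closure {u, v} = ⊤) (hu : u ∈ N) (hH : (Nat.card H).Coprime (orderOf v)) :
    H ≤ N := by
  intro x hx
  have hdvd_v : orderOf (x : G ⧸ N) ∣ orderOf v :=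
    (orderOf_dvd_of_mem_zpowers
      (QuotientGroup.mk_mem_zpowers_of_closure_pair_eq_top hgen hu x)).trans
        (orderOf_map_dvd (QuotientGroup.mk' N) v)
  have hdvd_H : orderOf (x : G ⧸ N) ∣ Nat.card H :=
    (orderOf_map_dvd (QuotientGroup.mk' N) x).trans (H.orderOf_dvd_natCard hx)
  have : orderOf (x : G ⧸ N) = 1 := Nat.eq_one_of_dvd_coprimes hH hdvd_H hdvd_v
  exact (QuotientGroup.eq_one_iff x).mp (orderOf_eq_one_iff.mp this)

theorem Sylow.eq_bot_of_le_center_of_closure_eq_top [Finite G] {p : ℕ} [Fact p.Prime]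
    (P : Sylow p G) (hPZ : (P : Subgroup G) ≤ center G) {S : Set G} (hS : closure S = ⊤)
    (hSp : ∀ x ∈ S, (orderOf x).Coprime p) : (P : Subgroup G) = ⊥ := by
  have hP : normalizer (P : Subgroup G) ≤ centralizer (P : Set G) := fun g _ =>
    mem_centralizer_iff.mpr fun h hh => (mem_center_iff.mp (hPZ hh) g).symm
  have hker : (MonoidHom.transferSylow P hP).ker = ⊤ := by
    rw [eq_top_iff, ← hS, closure_le]
    intro x hx
    refine MonoidHom.map_eq_one_of_coprime _ ?_
    rw [P.card_eq_multiplicity]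
    exact (hSp x hx).pow_right _
  simpa [hker] using MonoidHom.ker_transferSylow_disjoint P hP P P.2

theorem not_coprime_orderOf_sub_one_of_closure_pair_eq_top [Finite G] {p : ℕ}
    (hp : p.Prime) {P : Subgroup G} [P.Normal] (hPcard : Nat.card P = p)
    (hSylow : ¬ p ^ 2 ∣ Nat.card G) {u v : G} (hgen : closure {u, v} = ⊤)
    (hup : (orderOf u).Coprime p) (hvp : (orderOf v).Coprime p) :
    ¬ (orderOf u).Coprime (p - 1) := by
  intro hu
  have : Fact p.Prime := ⟨hp⟩
  have : IsCyclic P := isCyclic_of_prime_card hPcard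
  have huC : u ∈ centralizer (P : Set G) := mem_centralizer_of_coprime_card_mulAut <| by
    rwa [IsCyclic.card_mulAut, hPcard, Nat.totient_prime hp]
  set N := normalClosure {u}
  have hNC : N ≤ centralizer (P : Set G) := normalClosure_le_normal (by simpa using huC)
  have hPN : P ≤ N :=
    le_of_closure_pair_eq_top hgen (subset_normalClosure rfl) (hPcard ▸ hvp.symm)
  have hPindex : ¬ p ∣ P.index := fun h => hSylow <| by
    rw [← P.card_mul_index, hPcard, sq]
    exact mul_dvd_mul_left p h
  let Q : Sylow p G := (IsPGroup.of_card (n := 1) (by rw [hPcard, pow_one])).toSylow hPindex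
  have hPN_bot : P.subgroupOf N = ⊥ := by
    refine (Q.subtype hPN).eq_bot_of_le_center_of_closure_eq_top ?_
      closure_closure_coe_preimage ?_
    · intro x hx
      exact mem_center_iff.mpr fun g => Subtype.ext (hNC g.2 x hx).symm
    · intro x hx
      obtain ⟨_, rfl, c, hc⟩ := Group.mem_conjugatesOfSet_iff.mp hx
      rwa [← orderOf_coe, ← hc.orderOf_eq]
  have hPbot : P = ⊥ := (subgroupOf_eq_bot.mp hPN_bot).eq_bot_of_le hPN
  exact hp.one_lt.ne' (by rw [← hPcard, hPbot, card_bot])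

end

theorem stmt10_general (G : Type*) [Group G] [Finite G] (p : ℕ) (hp : p.Prime)
    (P : Subgroup G) (hPn : P.Normal) (hPcard : Nat.card P = p)
    (hSylow : ¬ p ^ 2 ∣ Nat.card G)
    (u v : G)
    (hgen : Subgroup.closure {u, v} = ⊤)
    (k ℓ : ℕ) (hk : orderOf u = k) (hl : orderOf v = ℓ)
    (hkp : Nat.Coprime k p) (hlp : Nat.Coprime ℓ p) :
    Nat.gcd k (p - 1) ≠ 1 ∧ Nat.gcd ℓ (p - 1) ≠ 1 := by
  subst hk hl
  exact ⟨not_coprime_orderOf_sub_one_of_closure_pair_eq_top hp hPcard hSylow hgen hkp hlp,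
    not_coprime_orderOf_sub_one_of_closure_pair_eq_top hp hPcard hSylow
      (Set.pair_comm u v ▸ hgen) hlp hkp⟩

theorem stmt10 (G : Type*) [Group G] [Finite G] (p : ℕ) (hp : p.Prime)
    (P : Subgroup G) (hPn : P.Normal) (hPcard : Nat.card P = p)
    (hSylow : ¬ p ^ 2 ∣ Nat.card G)
    (u v : G) (hu : u ≠ 1) (hv : v ≠ 1)
    (hgen : Subgroup.closure {u, v} = ⊤)
    (k ℓ : ℕ) (hk : orderOf u = k) (hl : orderOf v = ℓ)
    (hkp : Nat.Coprime k p) (hlp : Nat.Coprime ℓ p) :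
    Nat.gcd k (p - 1) ≠ 1 ∧ Nat.gcd ℓ (p - 1) ≠ 1 :=
  stmt10_general G p hp P hPn hPcard hSylow u v hgen k ℓ hk hl hkp hlp
end

section
/- Let G be a finite group with a normal Sylow p-subgroup P of order p, generated by two nontrivial elements u and v of orders k and ℓ coprime to p. If gcd(k, p−1) = gcd(ℓ, p−1) = 2, then p divides the order of uv. -/
/-!
Conjugation maps `G` to `Aut P ≅ C_{p-1}`, and `gcd(ord u, p - 1) = 2` forces `u²` (likewise `v²`)
into `C = C_G(P)`. In `C` the subgroup `P` is central of index `m` prime to `p`, so by the transfer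
`c ↦ c ^ m` is a homomorphism on `C`; its kernel `K` is a normal `p`-complement of `C`, normal in
`G`. Modulo `K` the squares of `u` and `v` die (they lie in `C/K ≅ C_p` and have order prime to
`p`), so `G/K` is generated by two involutions, i.e. dihedral, and `|G/K|` divides
`2 · ord(ū v̄)`. As `p` is odd and divides `|G/K|`, it divides `ord(ū v̄)`, hence `ord(uv)`.
-/

open Subgroup

namespace Subgroup

section Generic

variable {G : Type*} [Group G]

open scoped IsMulCommutative in
theorem mul_pow_index_of_le_center {N : Subgroup G} [N.FiniteIndex] (hN : N ≤ center G)
    (x y : G) : (x * y) ^ N.index = x ^ N.index * y ^ N.index := by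
  have key (g : G) (k : ℕ) (g₀ : G) (hk : g₀⁻¹ * g ^ k * g₀ ∈ N) : g₀⁻¹ * g ^ k * g₀ = g ^ k := by
    calc _ = g₀⁻¹ * g ^ k * g₀ * g₀ * g₀⁻¹ := by group
      _ = g ^ k := by rw [← mem_center_iff.mp (hN hk) g₀]; group
  have hτ (g : G) : (MonoidHom.transfer (inclusion hN) g : G) = g ^ N.index :=
    congrArg Subtype.val <| MonoidHom.transfer_eq_pow (inclusion hN) g (key g)
  simpa only [coe_mul, hτ] using
    congrArg Subtype.val (map_mul (MonoidHom.transfer (inclusion hN)) x y)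

theorem mem_normalizer_zpowers_of_conj_eq_inv {g x : G} (h : g * x * g⁻¹ = x⁻¹) :
    g ∈ normalizer (zpowers x : Set G) := by
  rw [mem_normalizer_iff_map_conj_eq, MonoidHom.map_zpowers]
  exact (congrArg zpowers h).trans zpowers_inv

theorem zpowers_mul_normal_of_sq_eq_one {a b : G} (ha : a ^ 2 = 1) (hb : b ^ 2 = 1)
    (hgen : closure {a, b} = ⊤) : (zpowers (a * b)).Normal := by
  rw [← normalizer_eq_top_iff, eq_top_iff, ← hgen, closure_le, Set.insert_subset_iff,
    Set.singleton_subset_iff]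
  have ha' : a⁻¹ = a := inv_eq_of_mul_eq_one_right (by rw [← sq, ha])
  have hb' : b⁻¹ = b := inv_eq_of_mul_eq_one_right (by rw [← sq, hb])
  constructor <;> apply mem_normalizer_zpowers_of_conj_eq_inv
  · rw [mul_inv_rev, ← mul_assoc, ← sq, ha, one_mul, hb']
  · rw [mul_inv_rev, ← mul_assoc, mul_inv_cancel_right, ha', hb']

end Generic

section Centralizer

variable {G : Type*} [Group G] (P : Subgroup G)

theorem subgroupOf_centralizer_le_center :
    P.subgroupOf (centralizer P) ≤ center (centralizer (P : Set G)) :=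
  fun n hn => mem_center_iff.mpr fun c => Subtype.ext (c.2 n hn).symm

theorem mem_centralizer_of_conjNormal_eq_one [P.Normal] {g : G}
    (hg : MulAut.conjNormal (H := P) g = 1) : g ∈ centralizer P := by
  intro h hh
  have := congrArg Subtype.val (DFunLike.congr_fun hg ⟨h, hh⟩)
  rw [MulAut.conjNormal_apply] at this
  exact (mul_inv_eq_iff_eq_mul.mp this).symm

theorem pow_gcd_card_mulAut_mem_centralizer [P.Normal] (w : G) :
    w ^ (orderOf w).gcd (Nat.card (MulAut P)) ∈ centralizer P := by
  apply mem_centralizer_of_conjNormal_eq_one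
  rw [map_pow, ← orderOf_dvd_iff_pow_eq_one]
  exact Nat.dvd_gcd (orderOf_map_dvd _ w) (_root_.orderOf_dvd_natCard _)

theorem not_dvd_relIndex_centralizer {p : ℕ} [Fact p.Prime] (hP : Nat.card P = p)
    (hG : ¬ p ^ 2 ∣ Nat.card G) : ¬ p ∣ P.relIndex (centralizer P) := by
  have : IsCyclic P := isCyclic_of_prime_card hP
  rintro ⟨m, hm⟩
  apply hG
  rw [← card_mul_index P, ← relIndex_mul_index (le_centralizer P), hP, hm]
  exact ⟨m * (centralizer (P : Set G)).index, by ring⟩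

end Centralizer

section CentralizerKernel

variable {G : Type*} [Group G] [Finite G] (P : Subgroup G)

theorem mul_pow_relIndex_centralizer {x y : G} (hx : x ∈ centralizer P) (hy : y ∈ centralizer P) :
    (x * y) ^ P.relIndex (centralizer P) =
      x ^ P.relIndex (centralizer P) * y ^ P.relIndex (centralizer P) :=
  congrArg Subtype.val
    (mul_pow_index_of_le_center (subgroupOf_centralizer_le_center P) ⟨x, hx⟩ ⟨y, hy⟩)

def centralizerKernel : Subgroup G where
  carrier := {g | g ∈ centralizer P ∧ g ^ P.relIndex (centralizer P) = 1}
  mul_mem' := fun {x y} ⟨hx, hx1⟩ ⟨hy, hy1⟩ => ⟨(centralizer (P : Set G)).mul_mem hx hy, by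
    rw [mul_pow_relIndex_centralizer P hx hy, hx1, hy1, one_mul]⟩
  one_mem' := ⟨one_mem _, one_pow _⟩
  inv_mem' := fun ⟨hx, hx1⟩ => ⟨inv_mem hx, by rw [inv_pow, hx1, inv_one]⟩

instance centralizerKernel_normal [P.Normal] : P.centralizerKernel.Normal where
  conj_mem _ := fun ⟨hx, hx1⟩ g => ⟨normal_centralizer.conj_mem _ hx g, by
    rw [conj_pow, hx1, mul_one, mul_inv_cancel]⟩

theorem mem_centralizerKernel_of_coprime [P.Normal] {c : G} (hc : c ∈ centralizer P)
    (hcop : (orderOf c).Coprime (Nat.card P)) : c ∈ P.centralizerKernel := by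
  refine ⟨hc, orderOf_eq_one_iff.mp ?_⟩
  have hmem : c ^ P.relIndex (centralizer P) ∈ P := by
    have := pow_index_mem (P.subgroupOf (centralizer P)) ⟨c, hc⟩
    rwa [mem_subgroupOf, coe_pow] at this
  exact (hcop.coprime_dvd_left (orderOf_pow_dvd _)).eq_one_of_dvd (orderOf_dvd_natCard P hmem)

variable {p : ℕ} [Fact p.Prime]

theorem not_dvd_card_centralizerKernel (hp : ¬ p ∣ P.relIndex (centralizer P)) :
    ¬ p ∣ Nat.card P.centralizerKernel := by
  intro hdvd
  obtain ⟨x, hx⟩ := exists_prime_orderOf_dvd_card' p hdvd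
  rw [← orderOf_coe] at hx
  exact hp (hx ▸ orderOf_dvd_of_pow_eq_one x.2.2)

theorem sq_mem_centralizerKernel [P.Normal] (hP : Nat.card P = p) {w : G}
    (hw : (orderOf w).gcd (p - 1) = 2) (hcop : (orderOf w).Coprime p) :
    w ^ 2 ∈ P.centralizerKernel := by
  have : IsCyclic P := isCyclic_of_prime_card hP
  have hcard : Nat.card (MulAut P) = p - 1 := by
    rw [IsCyclic.card_mulAut, hP, Nat.totient_prime Fact.out]
  apply mem_centralizerKernel_of_coprime P
  · simpa only [hcard, hw] using pow_gcd_card_mulAut_mem_centralizer P w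
  · exact hP ▸ hcop.coprime_dvd_left (orderOf_pow_dvd 2)

end CentralizerKernel

end Subgroup

theorem card_dvd_two_mul_orderOf_mul {G : Type*} [Group G] [Finite G] {a b : G}
    (ha : a ^ 2 = 1) (hb : b ^ 2 = 1) (hgen : closure {a, b} = ⊤) :
    Nat.card G ∣ 2 * orderOf (a * b) := by
  have := zpowers_mul_normal_of_sq_eq_one ha hb hgen
  set π := QuotientGroup.mk' (zpowers (a * b))
  have hπb : π b = (π a)⁻¹ :=
    eq_inv_of_mul_eq_one_right <| by
      rw [← map_mul, QuotientGroup.mk'_apply, QuotientGroup.eq_one_iff]; exact mem_zpowers _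
  have hcyc : ∀ y, y ∈ zpowers (π a) := by
    have hle : closure {a, b} ≤ (zpowers (π a)).comap π := by
      rw [closure_le, Set.insert_subset_iff, Set.singleton_subset_iff]
      exact ⟨mem_zpowers _,
        by simp only [SetLike.mem_coe, mem_comap, hπb, inv_mem_iff, mem_zpowers]⟩
    rw [hgen] at hle
    intro y
    obtain ⟨g, rfl⟩ := QuotientGroup.mk'_surjective _ y
    exact hle (mem_top g)
  have hquot : Nat.card (G ⧸ zpowers (a * b)) ∣ 2 := by
    rw [← orderOf_eq_card_of_forall_mem_zpowers hcyc]
    exact orderOf_dvd_of_pow_eq_one (by rw [← map_pow, ha, map_one])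
  rw [← card_mul_index (zpowers (a * b)), Nat.card_zpowers, index_eq_card, mul_comm 2]
  exact mul_dvd_mul_left _ hquot

theorem stmt11_general (G : Type*) [Group G] [Finite G] (p : ℕ) (hp : p.Prime)
    (P : Subgroup G) (hPn : P.Normal) (hPcard : Nat.card P = p)
    (hSylow : ¬ p ^ 2 ∣ Nat.card G)
    (u v : G)
    (hgen : Subgroup.closure {u, v} = ⊤)
    (k ℓ : ℕ) (hk : orderOf u = k) (hl : orderOf v = ℓ)
    (hkp : Nat.Coprime k p) (hlp : Nat.Coprime ℓ p)
    (hk2 : Nat.gcd k (p - 1) = 2) (hl2 : Nat.gcd ℓ (p - 1) = 2) :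
    p ∣ orderOf (u * v) := by
  have : Fact p.Prime := ⟨hp⟩
  subst hk hl
  set K := P.centralizerKernel
  set π := QuotientGroup.mk' K
  have hdihedral : Nat.card (G ⧸ K) ∣ 2 * orderOf (π u * π v) := by
    refine card_dvd_two_mul_orderOf_mul ?_ ?_ ?_
    · rw [← map_pow, QuotientGroup.mk'_apply, QuotientGroup.eq_one_iff]
      exact sq_mem_centralizerKernel P hPcard hk2 hkp
    · rw [← map_pow, QuotientGroup.mk'_apply, QuotientGroup.eq_one_iff]
      exact sq_mem_centralizerKernel P hPcard hl2 hlp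
    · rw [← Set.image_pair, ← MonoidHom.map_closure, hgen, ← MonoidHom.range_eq_map,
        MonoidHom.range_eq_top.mpr (QuotientGroup.mk'_surjective K)]
  have hpQ : p ∣ Nat.card (G ⧸ K) := by
    have hpG : p ∣ Nat.card K * K.index :=
      card_mul_index K ▸ hPcard ▸ card_subgroup_dvd_card P
    rw [← index_eq_card]
    exact (hp.dvd_mul.mp hpG).resolve_left
      (not_dvd_card_centralizerKernel P (not_dvd_relIndex_centralizer P hPcard hSylow))
  have hp2 : p.Coprime 2 := (Nat.coprime_primes hp Nat.prime_two).mpr (by rintro rfl; simp at hk2)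
  calc p ∣ orderOf (π u * π v) := hp2.dvd_of_dvd_mul_left (hpQ.trans hdihedral)
    _ ∣ orderOf (u * v) := map_mul π u v ▸ orderOf_map_dvd π (u * v)

theorem stmt11 (G : Type*) [Group G] [Finite G] (p : ℕ) (hp : p.Prime)
    (P : Subgroup G) (hPn : P.Normal) (hPcard : Nat.card P = p)
    (hSylow : ¬ p ^ 2 ∣ Nat.card G)
    (u v : G) (hu : u ≠ 1) (hv : v ≠ 1)
    (hgen : Subgroup.closure {u, v} = ⊤)
    (k ℓ : ℕ) (hk : orderOf u = k) (hl : orderOf v = ℓ)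
    (hkp : Nat.Coprime k p) (hlp : Nat.Coprime ℓ p)
    (hk2 : Nat.gcd k (p - 1) = 2) (hl2 : Nat.gcd ℓ (p - 1) = 2) :
    p ∣ orderOf (u * v) :=
  stmt11_general G p hp P hPn hPcard hSylow u v hgen k ℓ hk hl hkp hlp hk2 hl2
end

section
/- Let r, s, t be positive integers, and let n be a positive integer with a prime factor p such that: p² ∤ n; the only divisor of n congruent to 1 mod p is 1; p does not divide rst; and at least two of r, s, t are coprime to (p−1)/2. Then n is not the order of any finite quotient of the triangle group Δ⁺(r,s,t) = ⟨x, y | x^r = y^s = (xy)^t = 1⟩. -/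
/-- Relations for the ordinary triangle group Δ⁺(r,s,t) = ⟨x, y | x^r = y^s = (xy)^t = 1⟩. -/
def triangleRels (r s t : ℕ) : Set (FreeGroup (Fin 2)) :=
  {(FreeGroup.of 0) ^ r, (FreeGroup.of 1) ^ s, (FreeGroup.of 0 * FreeGroup.of 1) ^ t}

/-- The ordinary triangle group Δ⁺(r,s,t). -/
def TriangleGroup (r s t : ℕ) : Type := PresentedGroup (triangleRels r s t)

instance (r s t : ℕ) : Group (TriangleGroup r s t) :=
  inferInstanceAs (Group (PresentedGroup (triangleRels r s t)))

/-
The Sylow `p`-subgroup `P` is unique (their number divides `n` and is `1` mod `p`), hence normal of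
order `p`, and `G` acts on it through the cyclic group `Aut P` of order `p - 1`. Any two of
`x, y, xy` generate `G`; two of them have orders coprime to `(p - 1) / 2`, so their images in the
abelian group `Aut P` have order dividing `e = gcd 2 (p - 1)`, and therefore `g ^ e` centralises
`P` for every `g`. In `C = C_G(P)` the subgroup `P` is central and `p ∥ |C|`, so `c ↦ c ^ (|C| / p)`
is a homomorphism on `C`; its kernel `K` is a normal `p'`-subgroup of `G` with `c ^ p ∈ K` for all
`c ∈ C`. In `G / K` the images of `x, y, xy` have orders dividing both `r, s, t` and `e * p`, hence
dividing `e ∣ 2`; two commuting generators then force `G / K` to have exponent dividing `e`. But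
`p` divides `|G / K|`, and `p ∤ e` since `e ∣ p - 1`.
-/

theorem Nat.gcd_sub_one_dvd_gcd_two {p a : ℕ} (hp : p.Prime) (ha : a.Coprime ((p - 1) / 2)) :
    Nat.gcd a (p - 1) ∣ Nat.gcd 2 (p - 1) := by
  have hdvd : p - 1 ∣ 2 * ((p - 1) / 2) := by
    rcases eq_or_ne p 2 with rfl | hp2
    · exact Nat.one_dvd _
    · rw [Nat.mul_div_cancel' (hp.even_sub_one hp2).two_dvd]
  refine Nat.dvd_gcd ?_ (Nat.gcd_dvd_right a _)
  calc Nat.gcd a (p - 1) ∣ Nat.gcd a (2 * ((p - 1) / 2)) := Nat.gcd_dvd_gcd_of_dvd_right a hdvd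
    _ ∣ Nat.gcd a 2 * Nat.gcd a ((p - 1) / 2) := gcd_mul_dvd_mul_gcd a 2 _
    _ = Nat.gcd a 2 := by rw [ha, mul_one]
    _ ∣ 2 := Nat.gcd_dvd_right a 2

theorem pow_eq_one_of_coprime_of_pow_mul_eq_one {M : Type*} [Monoid M] {a : M} {k e p : ℕ}
    (hk : a ^ k = 1) (hkp : k.Coprime p) (he : a ^ (e * p) = 1) : a ^ e = 1 :=
  orderOf_dvd_iff_pow_eq_one.mp <|
    (hkp.coprime_dvd_left (orderOf_dvd_of_pow_eq_one hk)).dvd_of_dvd_mul_right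
      (orderOf_dvd_of_pow_eq_one he)

section

open Subgroup

variable {G : Type*} [Group G]

theorem Subgroup.closure_pair_mul_eq_top {a b : G} (h : closure {a, b} = ⊤) :
    closure {a, a * b} = ⊤ ∧ closure {b, a * b} = ⊤ := by
  have ha : a ∈ closure {a, a * b} := subset_closure (by simp)
  have hab : a * b ∈ closure {a, a * b} := subset_closure (by simp)
  have hb : b ∈ closure {b, a * b} := subset_closure (by simp)
  have hab' : a * b ∈ closure {b, a * b} := subset_closure (by simp)
  constructor <;> refine top_le_iff.mp (h ▸ (closure_le _).mpr ?_) <;> rintro _ (rfl | rfl)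
  · exact ha
  · simpa using mul_mem (inv_mem ha) hab
  · simpa using mul_mem hab' (inv_mem hb)
  · exact hb

theorem MonoidHom.commute_of_closure_pair_eq_top {H : Type*} [Group H] (φ : G →* H) {a b : G}
    (htop : closure {a, b} = ⊤) (hab : Commute (φ a) (φ b)) (g h : G) : Commute (φ g) (φ h) := by
  have hrange : closure {φ a, φ b} = φ.range := by
    rw [φ.range_eq_map, ← htop, φ.map_closure, Set.image_pair]
  have hcomm := isMulCommutative_closure (k := {φ a, φ b}) <| by
    rintro _ (rfl | rfl) _ (rfl | rfl)
    exacts [rfl, hab, hab.symm, rfl]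
  have hmem : ∀ g, φ g ∈ closure {φ a, φ b} := fun g => hrange ▸ ⟨g, rfl⟩
  exact congrArg Subtype.val (hcomm.is_comm.comm ⟨φ g, hmem g⟩ ⟨φ h, hmem h⟩)

theorem MonoidHom.pow_eq_one_of_closure_pair_eq_top {H : Type*} [Group H] (φ : G →* H) {a b : G}
    (htop : closure {a, b} = ⊤) (hab : Commute (φ a) (φ b)) {k : ℕ} (ha : φ a ^ k = 1)
    (hb : φ b ^ k = 1) (g : G) : φ g ^ k = 1 := by
  induction (htop ▸ mem_top g : g ∈ closure {a, b}) using closure_induction with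
  | mem x hx => rcases hx with rfl | rfl <;> assumption
  | one => rw [map_one, one_pow]
  | mul x y _ _ hx hy =>
    rw [map_mul, (φ.commute_of_closure_pair_eq_top htop hab x y).mul_pow, hx, hy, one_mul]
  | inv x _ hx => rw [map_inv, inv_pow, hx, inv_one]

theorem MonoidHom.pow_eq_one_of_closure_pair_eq_top_of_dvd_two {H : Type*} [Group H]
    (φ : G →* H) {a b : G} (htop : closure {a, b} = ⊤) {e : ℕ} (he : e ∣ 2) (ha : φ a ^ e = 1)
    (hb : φ b ^ e = 1) (hab : φ (a * b) ^ e = 1) (g : G) : φ g ^ e = 1 := by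
  have hinv : ∀ {z : H}, z ^ e = 1 → z⁻¹ = z := fun hz =>
    inv_eq_of_mul_eq_one_right <| by
      rw [← pow_two]; exact orderOf_dvd_iff_pow_eq_one.mp ((orderOf_dvd_of_pow_eq_one hz).trans he)
  refine φ.pow_eq_one_of_closure_pair_eq_top htop ?_ ha hb g
  rw [map_mul] at hab
  calc φ a * φ b = (φ a * φ b)⁻¹ := (hinv hab).symm
    _ = φ b * φ a := by rw [mul_inv_rev, hinv ha, hinv hb]

theorem IsCyclic.commute_mulAut [IsCyclic G] (σ τ : MulAut G) : Commute σ τ :=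
  (IsCyclic.mulAutMulEquiv G).injective <| by rw [map_mul, map_mul, mul_comm]

theorem Subgroup.mem_centralizer_of_conjNormal_eq_one_s15 {N : Subgroup G} [N.Normal] {g : G}
    (hg : MulAut.conjNormal (H := N) g = 1) : g ∈ centralizer N := by
  rw [mem_centralizer_iff]
  intro h hh
  have := congrArg (fun σ : MulAut N => ((σ ⟨h, hh⟩ : N) : G)) hg
  simp only [MulAut.conjNormal_apply, MulAut.one_apply] at this
  exact eq_mul_inv_iff_mul_eq.mp this.symm

/-- `g ↦ g ^ [G : Z(G)]` is the transfer `G →* Z(G)`. -/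
theorem mul_pow_of_index_center_dvd [(center G).FiniteIndex] {m : ℕ}
    (hm : (center G).index ∣ m) (a b : G) : (a * b) ^ m = a ^ m * b ^ m := by
  obtain ⟨j, rfl⟩ := hm
  have h := congrArg Subtype.val (map_mul (MonoidHom.transferCenterPow G) a b)
  simp only [MonoidHom.transferCenterPow_apply, coe_mul] at h
  have hcomm : Commute (a ^ (center G).index) (b ^ (center G).index) :=
    (mem_center_iff.mp ((center G).pow_index_mem a) _).symm
  rw [pow_mul, pow_mul, pow_mul, h, hcomm.mul_pow]

theorem Subgroup.card_dvd_card_center_centralizer (P : Subgroup G) [IsMulCommutative P] :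
    Nat.card P ∣ Nat.card (center (centralizer (P : Set G))) := by
  rw [← card_map_of_injective (f := (centralizer (P : Set G)).subtype) (subtype_injective _)]
  refine card_dvd_of_le fun h hh => ⟨⟨h, le_centralizer P hh⟩, ?_, rfl⟩
  rw [SetLike.mem_coe, mem_center_iff]
  exact fun c => Subtype.ext (mem_centralizer_iff.mp c.2 h hh).symm

variable [Finite G] {p : ℕ} [hp : Fact p.Prime]

theorem Sylow.card_eq_of_not_sq_dvd (P : Sylow p G) (hpG : p ∣ Nat.card G)
    (hp2 : ¬ p ^ 2 ∣ Nat.card G) : Nat.card P = p := by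
  have hG : Nat.card G ≠ 0 := Nat.card_pos.ne'
  have h1 := (hp.out.pow_dvd_iff_le_factorization hG).mp (by rwa [pow_one])
  have h2 := mt (hp.out.pow_dvd_iff_le_factorization hG).mpr hp2
  rw [P.card_eq_multiplicity, show (Nat.card G).factorization p = 1 by omega, pow_one]

theorem Subgroup.exists_normal_not_dvd_card_pow_mem {N : Subgroup G} [hN : N.Normal]
    (hZ : p ∣ Nat.card (center N)) (hp2 : ¬ p ^ 2 ∣ Nat.card N) :
    ∃ K : Subgroup G, K.Normal ∧ ¬ p ∣ Nat.card K ∧ ∀ c ∈ N, c ^ p ∈ K := by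
  set m := Nat.card N / p
  have hpm : p * m = Nat.card N :=
    Nat.mul_div_cancel' (hZ.trans (card_subgroup_dvd_card (center N)))
  have hpm' : ¬ p ∣ m := fun h => hp2 (hpm ▸ pow_two p ▸ mul_dvd_mul_left p h)
  have hidx : (center N).index ∣ m := by
    obtain ⟨z, hz⟩ := hZ
    refine ⟨z, Nat.eq_of_mul_eq_mul_left hp.out.pos ?_⟩
    rw [hpm, ← (center N).card_mul_index, hz]
    ring
  have hmul : ∀ {a b : G}, a ∈ N → b ∈ N → (a * b) ^ m = a ^ m * b ^ m := fun ha hb =>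
    congrArg Subtype.val (mul_pow_of_index_center_dvd hidx ⟨_, ha⟩ ⟨_, hb⟩)
  let K : Subgroup G :=
    { carrier := {g | g ∈ N ∧ g ^ m = 1}
      mul_mem' := fun ⟨ha, ha'⟩ ⟨hb, hb'⟩ => ⟨mul_mem ha hb, by rw [hmul ha hb, ha', hb', one_mul]⟩
      one_mem' := ⟨one_mem N, one_pow m⟩
      inv_mem' := fun ⟨ha, ha'⟩ => ⟨inv_mem ha, by rw [inv_pow, ha', inv_one]⟩ }
  refine ⟨K, ⟨fun n ⟨hn, hn'⟩ g => ⟨hN.conj_mem n hn g, ?_⟩⟩, fun hpK => ?_, fun c hc => ?_⟩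
  · rw [conj_pow, hn', mul_one, mul_inv_cancel]
  · obtain ⟨k, hk⟩ := exists_prime_orderOf_dvd_card' p hpK
    have := orderOf_dvd_of_pow_eq_one k.2.2
    rw [orderOf_coe, hk] at this
    exact hpm' this
  · refine ⟨pow_mem hc p, ?_⟩
    rw [← pow_mul, hpm]
    exact orderOf_dvd_iff_pow_eq_one.mp (N.orderOf_dvd_natCard hc)

theorem pow_gcd_two_mem_centralizer_of_triangle_generators {P : Subgroup G} [P.Normal]
    (hP : Nat.card P = p) {x y : G} {r s t : ℕ} (hgen : closure {x, y} = ⊤) (hx : x ^ r = 1)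
    (hy : y ^ s = 1) (hxy : (x * y) ^ t = 1)
    (htwo : (r.Coprime ((p - 1) / 2) ∧ s.Coprime ((p - 1) / 2)) ∨
      (r.Coprime ((p - 1) / 2) ∧ t.Coprime ((p - 1) / 2)) ∨
      (s.Coprime ((p - 1) / 2) ∧ t.Coprime ((p - 1) / 2))) (g : G) :
    g ^ Nat.gcd 2 (p - 1) ∈ centralizer (P : Set G) := by
  have : IsCyclic P := isCyclic_of_prime_card hP
  let χ : G →* MulAut P := MulAut.conjNormal
  have hcard : Nat.card (MulAut P) = p - 1 := by
    rw [IsCyclic.card_mulAut, hP, Nat.totient_prime hp.out]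
  have hχ : ∀ {a : G} {k : ℕ}, a ^ k = 1 → k.Coprime ((p - 1) / 2) →
      χ a ^ Nat.gcd 2 (p - 1) = 1 := fun ha hk =>
    orderOf_dvd_iff_pow_eq_one.mp <| (Nat.dvd_gcd (orderOf_dvd_of_pow_eq_one <| by
      rw [← map_pow, ha, map_one]) (hcard ▸ _root_.orderOf_dvd_natCard _)).trans
        (Nat.gcd_sub_one_dvd_gcd_two hp.out hk)
  have hcomm : ∀ a b : G, Commute (χ a) (χ b) := fun a b => IsCyclic.commute_mulAut _ _
  obtain ⟨hgen₁, hgen₂⟩ := closure_pair_mul_eq_top hgen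
  refine mem_centralizer_of_conjNormal_eq_one_s15 ?_
  rw [map_pow]
  rcases htwo with ⟨hr, hs⟩ | ⟨hr, ht⟩ | ⟨hs, ht⟩
  · exact χ.pow_eq_one_of_closure_pair_eq_top hgen (hcomm _ _) (hχ hx hr) (hχ hy hs) g
  · exact χ.pow_eq_one_of_closure_pair_eq_top hgen₁ (hcomm _ _) (hχ hx hr) (hχ hxy ht) g
  · exact χ.pow_eq_one_of_closure_pair_eq_top hgen₂ (hcomm _ _) (hχ hy hs) (hχ hxy ht) g

theorem card_sylow_ne_one_of_triangle_generators (hpG : p ∣ Nat.card G)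
    (hp2 : ¬ p ^ 2 ∣ Nat.card G) {x y : G} {r s t : ℕ} (hgen : closure {x, y} = ⊤)
    (hx : x ^ r = 1) (hy : y ^ s = 1) (hxy : (x * y) ^ t = 1) (hprst : ¬ p ∣ r * s * t)
    (htwo : (r.Coprime ((p - 1) / 2) ∧ s.Coprime ((p - 1) / 2)) ∨
      (r.Coprime ((p - 1) / 2) ∧ t.Coprime ((p - 1) / 2)) ∨
      (s.Coprime ((p - 1) / 2) ∧ t.Coprime ((p - 1) / 2))) :
    Nat.card (Sylow p G) ≠ 1 := by
  intro hsyl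
  obtain ⟨P⟩ : Nonempty (Sylow p G) := inferInstance
  have : Subsingleton (Sylow p G) := (Nat.card_eq_one_iff_unique.mp hsyl).1
  have := P.normal_of_subsingleton
  have hP := P.card_eq_of_not_sq_dvd hpG hp2
  have : IsCyclic (P : Subgroup G) := isCyclic_of_prime_card hP
  have hZ : p ∣ Nat.card (center (centralizer ((P : Subgroup G) : Set G))) :=
    by simpa only [hP] using card_dvd_card_center_centralizer (P : Subgroup G)
  obtain ⟨K, _, hpK, hKpow⟩ := exists_normal_not_dvd_card_pow_mem hZ
    (fun h => hp2 (h.trans (card_subgroup_dvd_card _)))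
  let π := QuotientGroup.mk' K
  have hrst : (r * s * t).Coprime p := Nat.coprime_comm.mp (hp.out.coprime_iff_not_dvd.mpr hprst)
  have hπ : ∀ {a : G} {k : ℕ}, a ^ k = 1 → k ∣ r * s * t → π a ^ Nat.gcd 2 (p - 1) = 1 :=
    fun ha hk => pow_eq_one_of_coprime_of_pow_mul_eq_one (by rw [← map_pow, ha, map_one])
      (hrst.coprime_dvd_left hk) <| by
        rw [← map_pow, pow_mul, QuotientGroup.mk'_apply, QuotientGroup.eq_one_iff]
        exact hKpow _ (pow_gcd_two_mem_centralizer_of_triangle_generators hP hgen hx hy hxy htwo _)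
  have hall := π.pow_eq_one_of_closure_pair_eq_top_of_dvd_two hgen (Nat.gcd_dvd_left 2 _)
    (hπ hx ((dvd_mul_right r s).mul_right t)) (hπ hy ((dvd_mul_left s r).mul_right t))
    (hπ hxy (dvd_mul_left t (r * s)))
  have hpQ : p ∣ Nat.card (G ⧸ K) := by
    rw [card_eq_card_quotient_mul_card_subgroup K] at hpG
    exact (hp.out.dvd_mul.mp hpG).resolve_right hpK
  obtain ⟨q, hq⟩ := exists_prime_orderOf_dvd_card' p hpQ
  obtain ⟨g, rfl⟩ := QuotientGroup.mk'_surjective K q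
  have hdvd : orderOf (π g) ∣ p - 1 :=
    (orderOf_dvd_of_pow_eq_one (hall g)).trans (Nat.gcd_dvd_right 2 _)
  rw [hq] at hdvd
  exact Nat.not_dvd_of_pos_of_lt (Nat.sub_pos_of_lt hp.out.one_lt) (Nat.sub_one_lt hp.out.ne_zero)
    hdvd

theorem TriangleGroup.exists_generators {r s t : ℕ} {G : Type*} [Group G]
    (f : TriangleGroup r s t →* G) (hf : Function.Surjective f) :
    ∃ x y : G, x ^ r = 1 ∧ y ^ s = 1 ∧ (x * y) ^ t = 1 ∧ closure {x, y} = ⊤ := by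
  let g : FreeGroup (Fin 2) →* G := f.comp (PresentedGroup.mk (triangleRels r s t))
  have hrel : ∀ w ∈ triangleRels r s t, g w = 1 := fun w hw =>
    (congrArg f (PresentedGroup.one_of_mem hw)).trans (map_one f)
  refine ⟨g (.of 0), g (.of 1), ?_, ?_, ?_, ?_⟩
  · simpa using hrel (.of 0 ^ r) (by simp [triangleRels])
  · simpa using hrel (.of 1 ^ s) (by simp [triangleRels])
  · simpa using hrel ((.of 0 * .of 1) ^ t) (by simp [triangleRels])
  · have hg : Function.Surjective g := hf.comp (PresentedGroup.mk_surjective _)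
    have hrange : Set.range (FreeGroup.of : Fin 2 → FreeGroup (Fin 2)) = {.of 0, .of 1} := by
      ext; simp [Fin.exists_fin_two, eq_comm]
    rw [← Set.image_pair, ← MonoidHom.map_closure, ← hrange, FreeGroup.closure_range_of,
      ← MonoidHom.range_eq_map, MonoidHom.range_eq_top.mpr hg]

end

theorem stmt15_general (r s t : ℕ)
    (n p : ℕ) (hp : p.Prime) (hpn : p ∣ n)
    (hp2 : ¬ p ^ 2 ∣ n) (hdiv : ∀ d : ℕ, d ∣ n → d % p = 1 % p → d = 1)
    (hprst : ¬ p ∣ r * s * t)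
    (htwo : (Nat.Coprime r ((p - 1) / 2) ∧ Nat.Coprime s ((p - 1) / 2)) ∨
            (Nat.Coprime r ((p - 1) / 2) ∧ Nat.Coprime t ((p - 1) / 2)) ∨
            (Nat.Coprime s ((p - 1) / 2) ∧ Nat.Coprime t ((p - 1) / 2))) :
    ¬ ∃ (G : Type) (_ : Group G) (_ : Finite G),
        Nat.card G = n ∧ ∃ f : TriangleGroup r s t →* G, Function.Surjective f := by
  rintro ⟨G, _, _, rfl, f, hf⟩
  have : Fact p.Prime := ⟨hp⟩
  obtain ⟨x, y, hx, hy, hxy, hgen⟩ := TriangleGroup.exists_generators f hf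
  obtain ⟨P⟩ : Nonempty (Sylow p G) := inferInstance
  refine card_sylow_ne_one_of_triangle_generators hpn hp2 hgen hx hy hxy hprst htwo (hdiv _ ?_ ?_)
  · exact P.card_dvd_index.trans (Subgroup.index_dvd_card _)
  · exact card_sylow_modEq_one p G

theorem stmt15 (r s t : ℕ) (hr : 0 < r) (hs : 0 < s) (ht : 0 < t)
    (n p : ℕ) (hn : 0 < n) (hp : p.Prime) (hpn : p ∣ n)
    (hp2 : ¬ p ^ 2 ∣ n) (hdiv : ∀ d : ℕ, d ∣ n → d % p = 1 % p → d = 1)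
    (hprst : ¬ p ∣ r * s * t)
    (htwo : (Nat.Coprime r ((p - 1) / 2) ∧ Nat.Coprime s ((p - 1) / 2)) ∨
            (Nat.Coprime r ((p - 1) / 2) ∧ Nat.Coprime t ((p - 1) / 2)) ∨
            (Nat.Coprime s ((p - 1) / 2) ∧ Nat.Coprime t ((p - 1) / 2))) :
    ¬ ∃ (G : Type) (_ : Group G) (_ : Finite G),
        Nat.card G = n ∧ ∃ f : TriangleGroup r s t →* G, Function.Surjective f :=
  stmt15_general r s t n p hp hpn hp2 hdiv hprst htwo
end
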